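/- arXiv:1803.06639 — 3 statements merged into one kernel-verified Lean document; each statement's English description precedes it below -/
import Mathlib

section
/- Let g_L(r; η) be the left ESFR correction function with parameter η ≥ 0 and degree p ≥ 1, and let h_L(r) = g_L(r; η_c) and h_R(r) = g_R(r; η_c) be correction functions with a (possibly different) parameter η_c ≥ 0. Then the function Δ_r g_L − g_L'(−1)·h_L' − g_L'(1)·h_R' equals ((−1)^p/2)[Ψ_p'' − Ψ_{p−1}''] + ((−1)^{p+1}/4) p(p+1)·(η_c Ψ_{p−1}' + Ψ_{p+1}')/(1+η_c) + ((−1)^p/4) p(p−1) Ψ_p', which is independent of η. -/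
/-!
Put `Q = (η_c Ψ_{p-1} + Ψ_{p+1}) / (1 + η_c)`. Then `h_L'` and `h_R'` are combinations of
`Ψ_p'` and `Q'` alone, so the claim is an algebraic identity once two facts about Legendre
polynomials are known: the endpoint values `Ψ_k'(±1) = (±1)^(k+1) k(k+1)/2`, and the recurrence
`Ψ_{p+1}' - Ψ_{p-1}' = (2p+1) Ψ_p`, whose derivative rewrites `Δ_r g_L`. Both come from
Rodrigues' formula: differentiating `(x² - 1)^(k+1)` once gives `Ψ_{k+1}' = x Ψ_k' + (k+1) Ψ_k`,
differentiating `(x² - 1)^(k+2)` twice gives the recurrence, and at `x = ±1` these two relations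
force `Ψ_k(±1) = (±1)^k`, hence the endpoint values of `Ψ_k'`.
-/

/-- The degree-`p` Legendre polynomial via the Rodrigues formula. -/
noncomputable def legendre (p : ℕ) (r : ℝ) : ℝ :=
  (1 / ((2:ℝ)^p * (Nat.factorial p))) * iteratedDeriv p (fun x : ℝ => (x^2 - 1)^p) r


/-- Left ESFR correction function with parameter `η`. -/
noncomputable def gL (p : ℕ) (η r : ℝ) : ℝ :=
  ((-1:ℝ)^p / 2) *
    (legendre p r - (η * legendre (p-1) r + legendre (p+1) r) / (1 + η))

/-- Right ESFR correction function with parameter `η`. -/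
noncomputable def gR (p : ℕ) (η r : ℝ) : ℝ :=
  (1/2 : ℝ) *
    (legendre p r + (η * legendre (p-1) r + legendre (p+1) r) / (1 + η))

open Polynomial

namespace Polynomial

variable {R : Type*} [CommRing R]

theorem derivative_X_sq_sub_one_pow_succ (k : ℕ) :
    derivative ((X ^ 2 - 1) ^ (k + 1) : R[X]) = C (2 * (k + 1 : R)) * ((X ^ 2 - 1) ^ k * X) := by
  rw [derivative_pow]
  simp only [derivative_sub, derivative_X_pow, derivative_one, map_mul, map_add, map_natCast,
    map_one, map_ofNat]
  push_cast
  ring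

theorem derivative_derivative_X_sq_sub_one_pow_add_two (k : ℕ) :
    derivative (derivative ((X ^ 2 - 1) ^ (k + 2) : R[X])) =
      C (2 * (k + 2) * (2 * k + 3) : R) * (X ^ 2 - 1) ^ (k + 1)
        + C (4 * (k + 2) * (k + 1) : R) * (X ^ 2 - 1) ^ k := by
  rw [derivative_X_sq_sub_one_pow_succ, derivative_C_mul, derivative_mul,
    derivative_X_sq_sub_one_pow_succ]
  simp only [derivative_X, map_mul, map_add, map_natCast, map_one, map_ofNat]
  push_cast
  ring

theorem iteratedDeriv_eval {𝕜 : Type*} [NontriviallyNormedField 𝕜] (q : 𝕜[X]) (n : ℕ) :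
    iteratedDeriv n (fun x => q.eval x) = fun x => (derivative^[n] q).eval x := by
  induction n with
  | zero => simp
  | succ n ih =>
    funext x
    rw [iteratedDeriv_succ, ih, Function.iterate_succ_apply', Polynomial.deriv]

end Polynomial

noncomputable def legendrePoly (k : ℕ) : ℝ[X] :=
  C (2 ^ k * k.factorial : ℝ)⁻¹ * derivative^[k] ((X ^ 2 - 1) ^ k)

theorem legendrePoly_zero : legendrePoly 0 = 1 := by
  simp [legendrePoly]

theorem derivative_legendrePoly_succ (k : ℕ) :
    derivative (legendrePoly (k + 1)) =
      X * derivative (legendrePoly k) + C (k + 1 : ℝ) * legendrePoly k := by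
  have hc : (2 ^ (k + 1) * (k + 1).factorial : ℝ)⁻¹ * (2 * (k + 1)) =
      (2 ^ k * k.factorial : ℝ)⁻¹ := by
    rw [Nat.factorial_succ]; push_cast; field_simp; ring
  rw [legendrePoly, derivative_C_mul, ← Function.iterate_succ_apply' derivative,
    Function.iterate_succ_apply, derivative_X_sq_sub_one_pow_succ, iterate_derivative_C_mul,
    iterate_derivative_mul_X, legendrePoly, derivative_C_mul,
    ← Function.iterate_succ_apply' derivative]
  simp only [Nat.add_sub_cancel, nsmul_eq_mul]
  rw [← mul_assoc, ← C_mul, hc]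
  simp only [map_add, map_natCast, map_one]
  push_cast
  ring

theorem derivative_legendrePoly_add_two (k : ℕ) :
    derivative (legendrePoly (k + 2)) =
      derivative (legendrePoly k) + C (2 * k + 3 : ℝ) * legendrePoly (k + 1) := by
  have hc₁ : (2 ^ (k + 2) * (k + 2).factorial : ℝ)⁻¹ * (2 * (k + 2) * (2 * k + 3)) =
      (2 ^ (k + 1) * (k + 1).factorial : ℝ)⁻¹ * (2 * k + 3) := by
    rw [Nat.factorial_succ (k + 1)]; push_cast; field_simp; ring
  have hc₂ : (2 ^ (k + 2) * (k + 2).factorial : ℝ)⁻¹ * (4 * (k + 2) * (k + 1)) =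
      (2 ^ k * k.factorial : ℝ)⁻¹ := by
    rw [Nat.factorial_succ (k + 1), Nat.factorial_succ k]; push_cast; field_simp; ring
  rw [legendrePoly, derivative_C_mul, ← Function.iterate_succ_apply' derivative,
    show (k + 2).succ = (k + 1) + 2 from rfl, Function.iterate_add_apply,
    show derivative^[2] ((X ^ 2 - 1) ^ (k + 2) : ℝ[X]) = derivative (derivative _) from rfl,
    derivative_derivative_X_sq_sub_one_pow_add_two, iterate_map_add,
    iterate_derivative_C_mul, iterate_derivative_C_mul, mul_add, ← mul_assoc, ← mul_assoc,
    ← C_mul, ← C_mul, hc₁, hc₂, legendrePoly, legendrePoly, derivative_C_mul,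
    ← Function.iterate_succ_apply' derivative, C_mul]
  ring

theorem legendrePoly_eval_of_sq_eq_one {s : ℝ} (hs : s ^ 2 = 1) (k : ℕ) :
    (legendrePoly k).eval s = s ^ k := by
  induction k with
  | zero => simp [legendrePoly_zero]
  | succ k ih =>
    have hSucc₀ := congrArg (eval s) (derivative_legendrePoly_succ k)
    have hSucc₁ := congrArg (eval s) (derivative_legendrePoly_succ (k + 1))
    have hAddTwo := congrArg (eval s) (derivative_legendrePoly_add_two k)
    simp only [eval_add, eval_mul, eval_X, eval_C, ih] at hSucc₀ hSucc₁ hAddTwo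
    have hk : ((k : ℝ) + 1) * ((legendrePoly (k + 1)).eval s - s ^ (k + 1)) = 0 := by
      push_cast at hSucc₁
      linear_combination (-1 : ℝ) * hAddTwo + hSucc₁ + s * hSucc₀
        + (derivative (legendrePoly k)).eval s * hs
    exact sub_eq_zero.mp ((mul_eq_zero.mp hk).resolve_left (by positivity))

theorem derivative_legendrePoly_eval_of_sq_eq_one {s : ℝ} (hs : s ^ 2 = 1) (k : ℕ) :
    (derivative (legendrePoly k)).eval s = s ^ (k + 1) * (k * (k + 1) / 2) := by
  induction k with
  | zero => simp [legendrePoly_zero]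
  | succ k ih =>
    rw [derivative_legendrePoly_succ, eval_add, eval_mul, eval_mul, eval_X, eval_C, ih,
      legendrePoly_eval_of_sq_eq_one hs]
    push_cast
    linear_combination (-(k + 1 : ℝ) * s ^ k) * hs

theorem legendre_eq_eval (k : ℕ) : legendre k = fun r => (legendrePoly k).eval r := by
  funext r
  have hu : (fun x : ℝ => (x ^ 2 - 1) ^ k) = fun x => ((X ^ 2 - 1) ^ k : ℝ[X]).eval x := by
    simp
  rw [legendre, hu, iteratedDeriv_eval, legendrePoly, eval_mul, eval_C, one_div]

theorem differentiable_legendre (k : ℕ) : Differentiable ℝ (legendre k) := by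
  rw [legendre_eq_eval]
  exact Polynomial.differentiable _

theorem deriv_legendre (k : ℕ) (r : ℝ) :
    deriv (legendre k) r = (derivative (legendrePoly k)).eval r := by
  rw [legendre_eq_eval, Polynomial.deriv]

theorem differentiable_deriv_legendre (k : ℕ) : Differentiable ℝ (deriv (legendre k)) := by
  rw [funext (deriv_legendre k)]
  exact Polynomial.differentiable _

theorem deriv_deriv_legendre (k : ℕ) (r : ℝ) :
    deriv (deriv (legendre k)) r = (derivative (derivative (legendrePoly k))).eval r := by
  rw [funext (deriv_legendre k), Polynomial.deriv]

theorem deriv_legendre_one (k : ℕ) : deriv (legendre k) 1 = k * (k + 1) / 2 := by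
  rw [deriv_legendre, derivative_legendrePoly_eval_of_sq_eq_one (one_pow 2), one_pow, one_mul]

theorem deriv_legendre_neg_one (k : ℕ) :
    deriv (legendre k) (-1) = (-1) ^ (k + 1) * (k * (k + 1) / 2) := by
  rw [deriv_legendre, derivative_legendrePoly_eval_of_sq_eq_one (by norm_num)]

theorem deriv_deriv_legendre_add_two (k : ℕ) (r : ℝ) :
    deriv (deriv (legendre (k + 2))) r =
      deriv (deriv (legendre k)) r + (2 * k + 3) * deriv (legendre (k + 1)) r := by
  rw [deriv_deriv_legendre, deriv_deriv_legendre, deriv_legendre, derivative_legendrePoly_add_two,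
    derivative_add, derivative_C_mul, eval_add, eval_mul, eval_C]

theorem deriv_gL (p : ℕ) (η : ℝ) :
    deriv (gL p η) = fun r => ((-1) ^ p / 2) * (deriv (legendre p) r
      - (η * deriv (legendre (p - 1)) r + deriv (legendre (p + 1)) r) / (1 + η)) := by
  funext r
  have hL (k : ℕ) := (differentiable_legendre k r).hasDerivAt
  have hQ := (((hL (p - 1)).const_mul η).add (hL (p + 1))).div_const (1 + η)
  exact (((hL p).sub hQ).const_mul ((-1) ^ p / 2)).deriv

theorem deriv_gR (p : ℕ) (η : ℝ) :
    deriv (gR p η) = fun r => (1 / 2) * (deriv (legendre p) r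
      + (η * deriv (legendre (p - 1)) r + deriv (legendre (p + 1)) r) / (1 + η)) := by
  funext r
  have hL (k : ℕ) := (differentiable_legendre k r).hasDerivAt
  have hQ := (((hL (p - 1)).const_mul η).add (hL (p + 1))).div_const (1 + η)
  exact (((hL p).add hQ).const_mul (1 / 2)).deriv

theorem deriv_deriv_gL (p : ℕ) (η : ℝ) :
    deriv (deriv (gL p η)) = fun r => ((-1) ^ p / 2) * (deriv (deriv (legendre p)) r
      - (η * deriv (deriv (legendre (p - 1))) r + deriv (deriv (legendre (p + 1))) r)
        / (1 + η)) := by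
  rw [deriv_gL]
  funext r
  have hL (k : ℕ) := (differentiable_deriv_legendre k r).hasDerivAt
  have hQ := (((hL (p - 1)).const_mul η).add (hL (p + 1))).div_const (1 + η)
  exact (((hL p).sub hQ).const_mul ((-1) ^ p / 2)).deriv

theorem gL_combination_independent_of_eta_general (p : ℕ) (hp : 1 ≤ p)
    (η ηc : ℝ) (hη : 0 ≤ η) (r : ℝ) :
    deriv (deriv (gL p η)) r
      - deriv (gL p η) (-1) * deriv (gL p ηc) r
      - deriv (gL p η) 1 * deriv (gR p ηc) r
    = ((-1:ℝ)^p / 2) *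
        (deriv (deriv (legendre p)) r - deriv (deriv (legendre (p-1))) r)
      + ((-1:ℝ)^(p+1) / 4) * ((p:ℝ)*((p:ℝ)+1)) *
          ((ηc * deriv (legendre (p-1)) r + deriv (legendre (p+1)) r) / (1 + ηc))
      + ((-1:ℝ)^p / 4) * ((p:ℝ)*((p:ℝ)-1)) * deriv (legendre p) r := by
  obtain ⟨m, rfl⟩ := Nat.exists_eq_add_of_le' hp
  have hη₁ : 1 + η ≠ 0 := by positivity
  rw [deriv_deriv_gL]
  simp only [deriv_gL, deriv_gR, Nat.add_sub_cancel]
  rw [deriv_deriv_legendre_add_two m r, deriv_legendre_one, deriv_legendre_one,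
    deriv_legendre_one, deriv_legendre_neg_one, deriv_legendre_neg_one, deriv_legendre_neg_one]
  generalize (ηc * deriv (legendre m) r + deriv (legendre (m + 2)) r) / (1 + ηc) = q
  push_cast
  rcases Nat.even_or_odd m with hm | hm <;>
  · simp only [pow_succ, hm.neg_one_pow]
    field_simp
    ring

theorem gL_combination_independent_of_eta (p : ℕ) (hp : 1 ≤ p)
    (η ηc : ℝ) (hη : 0 ≤ η) (hηc : 0 ≤ ηc) (r : ℝ) :
    deriv (deriv (gL p η)) r
      - deriv (gL p η) (-1) * deriv (gL p ηc) r
      - deriv (gL p η) 1 * deriv (gR p ηc) r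
    = ((-1:ℝ)^p / 2) *
        (deriv (deriv (legendre p)) r - deriv (deriv (legendre (p-1))) r)
      + ((-1:ℝ)^(p+1) / 4) * ((p:ℝ)*((p:ℝ)+1)) *
          ((ηc * deriv (legendre (p-1)) r + deriv (legendre (p+1)) r) / (1 + ηc))
      + ((-1:ℝ)^p / 4) * ((p:ℝ)*((p:ℝ)-1)) * deriv (legendre p) r :=
  gL_combination_independent_of_eta_general p hp η ηc hη r
end

section
/- Let g_R be the right ESFR correction function with parameter η = 0 and degree p ≥ 1. Then for every polynomial φ of degree at most p, ∫_{−1}^{1} g_R'(r) φ(r) dr = φ(1). -/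
section Aux

open Polynomial

/-- The polynomial `(X^2-1)^n`. -/
noncomputable def Qpoly (n : ℕ) : Polynomial ℝ := ((X : Polynomial ℝ)^2 - 1)^n

lemma Qpoly_ne_zero (n : ℕ) : Qpoly n ≠ 0 := by
  apply pow_ne_zero
  intro h
  have := congrArg (fun q => Polynomial.eval (0:ℝ) q) h
  simp at this

lemma Qpoly_factor_one (n : ℕ) :
    Qpoly n = (X - C (1:ℝ))^n * (X + 1)^n := by
  rw [Qpoly, ← mul_pow]
  congr 1
  ring_nf
  simp [Polynomial.C_1]
  ring

lemma Qpoly_factor_neg_one (n : ℕ) :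
    Qpoly n = (X - C (-1:ℝ))^n * (X - 1)^n := by
  rw [Qpoly, ← mul_pow]
  congr 1
  ring_nf
  simp [Polynomial.C_1]
  ring

lemma Qpoly_root (n m : ℕ) (hm : m < n) (a : ℝ) (ha : a = 1 ∨ a = -1) :
    (derivative^[m] (Qpoly n)).eval a = 0 := by
  have hmult : n ≤ (Qpoly n).rootMultiplicity a := by
    rw [Polynomial.le_rootMultiplicity_iff (Qpoly_ne_zero n)]
    rcases ha with rfl | rfl
    · rw [Qpoly_factor_one]; exact Dvd.intro _ rfl
    · rw [Qpoly_factor_neg_one]; exact Dvd.intro _ rfl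
  exact Polynomial.isRoot_iterate_derivative_of_lt_rootMultiplicity (lt_of_lt_of_le hm hmult)

/-- `D^k ((X-a)^k g)` evaluated at `a` equals `k! g(a)`. -/
lemma key_eval (a : ℝ) : ∀ (k : ℕ) (g : Polynomial ℝ),
    (derivative^[k] ((X - C a)^k * g)).eval a = (k.factorial : ℝ) * g.eval a := by
  intro k
  induction k with
  | zero => intro g; simp
  | succ k ih =>
    intro g
    have hd : derivative ((X - C a)^(k+1) * g)
        = (X - C a)^k * (((k:ℝ)+1) • g + (X - C a) * derivative g) := by
      rw [derivative_mul, derivative_pow]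
      simp only [derivative_sub, derivative_X, derivative_C, sub_zero, mul_one]
      push_cast
      ring_nf
      rw [smul_eq_C_mul]
      ring
    rw [Function.iterate_succ_apply, hd, ih]
    simp [Nat.factorial_succ]
    ring

lemma eval_iter_Qpoly_one (k : ℕ) :
    (derivative^[k] (Qpoly k)).eval 1 = (k.factorial : ℝ) * 2^k := by
  rw [Qpoly_factor_one, key_eval]
  norm_num

lemma eval_iter_Qpoly_neg_one (k : ℕ) :
    (derivative^[k] (Qpoly k)).eval (-1) = (k.factorial : ℝ) * (-2)^k := by
  rw [Qpoly_factor_neg_one, key_eval]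
  norm_num

/-- The Legendre polynomial as a `Polynomial ℝ`. -/
noncomputable def Lpoly (k : ℕ) : Polynomial ℝ :=
  C (1 / ((2:ℝ)^k * (Nat.factorial k))) * derivative^[k] (Qpoly k)

lemma iteratedDeriv_polyEval (n : ℕ) (q : Polynomial ℝ) :
    iteratedDeriv n (fun x => q.eval x) = fun r => (derivative^[n] q).eval r := by
  induction n generalizing q with
  | zero => simp
  | succ n ih =>
    rw [iteratedDeriv_succ']
    have : deriv (fun x => q.eval x) = fun x => (derivative q).eval x := by
      funext x; exact Polynomial.deriv q
    rw [this, ih, Function.iterate_succ_apply]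

lemma legendre_eq (k : ℕ) : legendre k = fun r => (Lpoly k).eval r := by
  funext r
  have hf : (fun x : ℝ => (x^2 - 1)^k) = fun x => (Qpoly k).eval x := by
    funext x; simp [Qpoly]
  rw [legendre, hf, iteratedDeriv_polyEval]
  simp [Lpoly]

lemma Lpoly_eval_one (k : ℕ) : (Lpoly k).eval 1 = 1 := by
  have h2 : ((2:ℝ)^k * (Nat.factorial k)) ≠ 0 := by
    positivity
  rw [Lpoly, Polynomial.eval_mul, Polynomial.eval_C, eval_iter_Qpoly_one]
  field_simp

lemma Lpoly_eval_neg_one (k : ℕ) : (Lpoly k).eval (-1) = (-1)^k := by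
  have h2 : ((2:ℝ)^k * (Nat.factorial k)) ≠ 0 := by positivity
  rw [Lpoly, Polynomial.eval_mul, Polynomial.eval_C, eval_iter_Qpoly_neg_one]
  have : ((-2:ℝ))^k = (-1)^k * 2^k := by
    rw [show (-2:ℝ) = (-1) * 2 by norm_num, mul_pow]
  rw [this]
  field_simp

/-- Integration by parts for polynomials on `[-1,1]`. -/
lemma poly_ibp (q s : Polynomial ℝ) :
    ∫ x in (-1:ℝ)..1, (derivative q).eval x * s.eval x
      = q.eval 1 * s.eval 1 - q.eval (-1) * s.eval (-1)
        - ∫ x in (-1:ℝ)..1, q.eval x * (derivative s).eval x := by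
  have hc : ∀ t : Polynomial ℝ, Continuous (fun x : ℝ => t.eval x) := fun t =>
    t.continuous
  have hint : ∀ t : Polynomial ℝ, IntervalIntegrable (fun x => t.eval x)
      MeasureTheory.volume (-1:ℝ) 1 := fun t => (hc t).intervalIntegrable _ _
  have h := intervalIntegral.integral_deriv_mul_eq_sub_of_hasDerivAt
      (u := fun x => q.eval x) (v := fun x => s.eval x)
      (u' := fun x => (derivative q).eval x) (v' := fun x => (derivative s).eval x)
      (hc q).continuousOn (hc s).continuousOn
      (fun x _ => q.hasDerivAt x) (fun x _ => s.hasDerivAt x)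
      (hint _) (hint _)
  have hadd := intervalIntegral.integral_add
      (μ := MeasureTheory.volume) (a := (-1:ℝ)) (b := 1)
      (f := fun x => (derivative q).eval x * s.eval x)
      (g := fun x => q.eval x * (derivative s).eval x)
      (((hc (derivative q)).mul (hc s)).intervalIntegrable _ _)
      (((hc q).mul (hc (derivative s))).intervalIntegrable _ _)
  rw [hadd] at h
  linarith

/-- Orthogonality: `D^n (X^2-1)^n` is orthogonal to polynomials of degree `< n`. -/
lemma orth (n : ℕ) (s : Polynomial ℝ) (hs : s.natDegree < n) :
    ∫ x in (-1:ℝ)..1, (derivative^[n] (Qpoly n)).eval x * s.eval x = 0 := by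
  have aux : ∀ j ≤ n,
      ∫ x in (-1:ℝ)..1, (derivative^[n] (Qpoly n)).eval x * s.eval x
        = (-1:ℝ)^j * ∫ x in (-1:ℝ)..1,
            (derivative^[n-j] (Qpoly n)).eval x * (derivative^[j] s).eval x := by
    intro j
    induction j with
    | zero => intro _; simp
    | succ j ih =>
      intro hj
      rw [ih (Nat.le_of_succ_le hj)]
      have hlt : n - j - 1 < n := by omega
      have hD : derivative^[n-j] (Qpoly n)
          = derivative (derivative^[n-j-1] (Qpoly n)) := by
        obtain ⟨m, hm⟩ : ∃ m, n - j = m + 1 := ⟨n - j - 1, by omega⟩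
        conv_lhs => rw [hm]
        rw [Function.iterate_succ_apply', show m = n - j - 1 by omega]
      rw [hD, poly_ibp]
      rw [Qpoly_root n (n-j-1) hlt 1 (Or.inl rfl),
          Qpoly_root n (n-j-1) hlt (-1) (Or.inr rfl)]
      rw [Function.iterate_succ_apply']
      have h2 : n - (j+1) = n - j - 1 := by omega
      rw [h2]
      ring
  rw [aux n le_rfl]
  rw [Polynomial.iterate_derivative_eq_zero hs]
  simp

lemma int_lin (c d : ℝ) (f g h s : Polynomial ℝ)
    (hh : ∀ x : ℝ, h.eval x * s.eval x = c * (f.eval x * s.eval x) + d * (g.eval x * s.eval x))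
    (hf : ∫ x in (-1:ℝ)..1, f.eval x * s.eval x = 0)
    (hg : ∫ x in (-1:ℝ)..1, g.eval x * s.eval x = 0) :
    ∫ x in (-1:ℝ)..1, h.eval x * s.eval x = 0 := by
  have hint : ∀ t u : Polynomial ℝ, IntervalIntegrable (fun x => t.eval x * u.eval x)
      MeasureTheory.volume (-1:ℝ) 1 := fun t u =>
    ((t.continuous).mul (u.continuous)).intervalIntegrable _ _
  calc ∫ x in (-1:ℝ)..1, h.eval x * s.eval x
      = ∫ x in (-1:ℝ)..1,
          (c * (f.eval x * s.eval x) + d * (g.eval x * s.eval x)) := by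
        apply intervalIntegral.integral_congr
        intro x _; exact hh x
    _ = c * (∫ x in (-1:ℝ)..1, f.eval x * s.eval x)
        + d * (∫ x in (-1:ℝ)..1, g.eval x * s.eval x) := by
        rw [intervalIntegral.integral_add ((hint f s).const_mul c) ((hint g s).const_mul d),
          intervalIntegral.integral_const_mul, intervalIntegral.integral_const_mul]
    _ = 0 := by rw [hf, hg]; ring

end Aux

open Polynomial in
theorem gR_DG_lifting (p : ℕ) (hp : 1 ≤ p)
    (φ : Polynomial ℝ) (hφ : φ.degree ≤ (p : ℕ)) :
    ∫ r in (-1:ℝ)..1, deriv (gR p 0) r * φ.eval r = φ.eval 1 := by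
  set GR : Polynomial ℝ := C (1/2 : ℝ) * (Lpoly p + Lpoly (p+1)) with hGR
  have hgr : gR p 0 = fun r => GR.eval r := by
    funext r
    simp [gR, legendre_eq, hGR]
  have hderiv : deriv (gR p 0) = fun r => (derivative GR).eval r := by
    rw [hgr]; funext r; exact Polynomial.deriv GR
  rw [hderiv]
  rw [poly_ibp]
  have hGR1 : GR.eval 1 = 1 := by
    simp [hGR, Lpoly_eval_one]
    norm_num
  have hGRm1 : GR.eval (-1) = 0 := by
    simp [hGR, Lpoly_eval_neg_one, pow_succ]
  rw [hGR1, hGRm1]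
  have hφd : (derivative φ).natDegree < p := by
    have h1 : φ.natDegree ≤ p := Polynomial.natDegree_le_iff_degree_le.mpr hφ
    have h2 : (derivative φ).natDegree ≤ φ.natDegree - 1 :=
      Polynomial.natDegree_derivative_le φ
    omega
  have hzero : (∫ x in (-1:ℝ)..1, GR.eval x * (derivative φ).eval x) = 0 := by
    apply int_lin (1/2 * (1 / ((2:ℝ)^p * (Nat.factorial p))))
      (1/2 * (1 / ((2:ℝ)^(p+1) * (Nat.factorial (p+1)))))
      (derivative^[p] (Qpoly p)) (derivative^[p+1] (Qpoly (p+1))) GR (derivative φ)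
    · intro x
      simp [hGR, Lpoly]
      ring
    · exact orth p (derivative φ) hφd
    · exact orth (p+1) (derivative φ) (Nat.lt_succ_of_lt hφd)
  rw [hzero]
  ring
end

section
/- Let N ≥ 2 and let (u_e)_{e=0}^{N} be real numbers with u_0 = u_N = 0 (Dirichlet/periodic boundary jumps). Let J > 0, A, B be real numbers, and for 1 ≤ e ≤ N−1 set Θ_e = −u_e²·[τ + A/(2J)] − (B/(4J))·u_e·(u_{e−1} + u_{e+1}). Then Σ_{e=1}^{N−1} Θ_e ≤ −Σ_{e=1}^{N−1} u_e²·[τ + (A − |B|)/(2J)]. In particular, if τ ≥ (|B| − A)/(2J), then Σ_{e=1}^{N−1} Θ_e ≤ 0. -/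
theorem ip_edge_sum_estimate (N : ℕ) (hN : 2 ≤ N) (u : ℕ → ℝ)
    (h0 : u 0 = 0) (hNend : u N = 0) (J A B τ : ℝ) (hJ : 0 < J)
    (Θ : ℕ → ℝ)
    (hΘ : ∀ e ∈ Finset.Icc 1 (N-1),
      Θ e = -(u e)^2 * (τ + A/(2*J)) - (B/(4*J)) * u e * (u (e-1) + u (e+1))) :
    (∑ e ∈ Finset.Icc 1 (N-1), Θ e
        ≤ -∑ e ∈ Finset.Icc 1 (N-1), (u e)^2 * (τ + (A - |B|)/(2*J))) ∧
    ((|B| - A)/(2*J) ≤ τ → ∑ e ∈ Finset.Icc 1 (N-1), Θ e ≤ 0) := by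
  set S := ∑ e ∈ Finset.Icc 1 (N-1), (u e)^2 with hS
  set T := ∑ e ∈ Finset.Icc 1 (N-1), u e * (u (e-1) + u (e+1)) with hTdef
  -- shifted sums
  have hL : ∑ e ∈ Finset.Icc 1 (N-1), (u (e-1))^2 ≤ S := by
    have h1 : ∑ e ∈ Finset.Icc 1 (N-1), (u (e-1))^2
        = ∑ e ∈ Finset.Icc 0 (N-2), (u e)^2 := by
      apply Finset.sum_nbij' (fun e => e - 1) (fun e => e + 1)
      · intro a ha; simp only [Finset.mem_Icc] at *; omega
      · intro a ha; simp only [Finset.mem_Icc] at *; omega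
      · intro a ha; simp only [Finset.mem_Icc] at ha; omega
      · intro a ha; simp only [Finset.mem_Icc] at ha; omega
      · intro a ha; rfl
    rw [h1]
    have h2 : ∑ e ∈ Finset.Icc 0 (N-2), (u e)^2
        = ∑ e ∈ Finset.Icc 1 (N-2), (u e)^2 := by
      rw [show Finset.Icc 0 (N-2) = insert 0 (Finset.Icc 1 (N-2)) by
        ext x; simp [Finset.mem_Icc, Finset.mem_insert]; omega]
      rw [Finset.sum_insert (by simp [Finset.mem_Icc])]
      simp [h0]
    rw [h2]
    apply Finset.sum_le_sum_of_subset_of_nonneg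
    · apply Finset.Icc_subset_Icc_right; omega
    · intro i _ _; positivity
  have hR : ∑ e ∈ Finset.Icc 1 (N-1), (u (e+1))^2 ≤ S := by
    have h1 : ∑ e ∈ Finset.Icc 1 (N-1), (u (e+1))^2
        = ∑ e ∈ Finset.Icc 2 N, (u e)^2 := by
      apply Finset.sum_nbij' (fun e => e + 1) (fun e => e - 1)
      · intro a ha; simp only [Finset.mem_Icc] at *; omega
      · intro a ha; simp only [Finset.mem_Icc] at *; omega
      · intro a ha; simp only [Finset.mem_Icc] at ha; omega
      · intro a ha; simp only [Finset.mem_Icc] at ha; omega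
      · intro a ha; rfl
    rw [h1]
    have h2 : ∑ e ∈ Finset.Icc 2 N, (u e)^2
        = ∑ e ∈ Finset.Icc 2 (N-1), (u e)^2 := by
      rw [show Finset.Icc 2 N = insert N (Finset.Icc 2 (N-1)) by
        ext x; simp [Finset.mem_Icc, Finset.mem_insert]; omega]
      rw [Finset.sum_insert (by simp [Finset.mem_Icc]; omega)]
      simp [hNend]
    rw [h2]
    apply Finset.sum_le_sum_of_subset_of_nonneg
    · apply Finset.Icc_subset_Icc_left; omega
    · intro i _ _; positivity
  have hT : |T| ≤ 2 * S := by
    calc |T| ≤ ∑ e ∈ Finset.Icc 1 (N-1), |u e * (u (e-1) + u (e+1))| :=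
          Finset.abs_sum_le_sum_abs _ _
      _ ≤ ∑ e ∈ Finset.Icc 1 (N-1), ((u e)^2 + (u (e-1))^2/2 + (u (e+1))^2/2) := by
          apply Finset.sum_le_sum
          intro e _
          have h1 : |u e * (u (e-1) + u (e+1))| ≤ |u e| * |u (e-1)| + |u e| * |u (e+1)| := by
            calc |u e * (u (e-1) + u (e+1))| = |u e| * |u (e-1) + u (e+1)| := abs_mul _ _
              _ ≤ |u e| * (|u (e-1)| + |u (e+1)|) := by
                  apply mul_le_mul_of_nonneg_left (abs_add_le _ _) (abs_nonneg _)
              _ = _ := by ring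
          have h2 : |u e| * |u (e-1)| ≤ ((u e)^2 + (u (e-1))^2)/2 := by
            nlinarith [sq_abs (u e), sq_abs (u (e-1)), sq_nonneg (|u e| - |u (e-1)|)]
          have h3 : |u e| * |u (e+1)| ≤ ((u e)^2 + (u (e+1))^2)/2 := by
            nlinarith [sq_abs (u e), sq_abs (u (e+1)), sq_nonneg (|u e| - |u (e+1)|)]
          linarith
      _ = S + (∑ e ∈ Finset.Icc 1 (N-1), (u (e-1))^2)/2
            + (∑ e ∈ Finset.Icc 1 (N-1), (u (e+1))^2)/2 := by
          rw [Finset.sum_add_distrib, Finset.sum_add_distrib, ← Finset.sum_div, ← Finset.sum_div]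
      _ ≤ 2 * S := by linarith
  have hSum : ∑ e ∈ Finset.Icc 1 (N-1), Θ e = -(τ + A/(2*J)) * S - (B/(4*J)) * T := by
    rw [hS, hTdef, Finset.mul_sum, Finset.mul_sum, ← Finset.sum_sub_distrib]
    apply Finset.sum_congr rfl
    intro e he
    rw [hΘ e he]; ring
  have hSnn : 0 ≤ S := Finset.sum_nonneg fun i _ => by positivity
  have hRHS : -∑ e ∈ Finset.Icc 1 (N-1), (u e)^2 * (τ + (A - |B|)/(2*J))
      = -(τ + (A - |B|)/(2*J)) * S := by
    rw [hS, Finset.mul_sum, ← Finset.sum_neg_distrib]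
    apply Finset.sum_congr rfl
    intro e _; ring
  have hBT : -(B/(4*J)) * T ≤ (|B|/(2*J)) * S := by
    have h1 : -(B/(4*J)) * T ≤ |B/(4*J)| * |T| := by
      calc -(B/(4*J)) * T ≤ |(-(B/(4*J))) * T| := le_abs_self _
        _ = |B/(4*J)| * |T| := by rw [abs_mul, abs_neg]
    have h2 : |B/(4*J)| = |B|/(4*J) := by
      rw [abs_div]; congr 1; rw [abs_of_pos (by linarith)]
    have h3 : |B|/(4*J) * |T| ≤ |B|/(4*J) * (2*S) := by
      apply mul_le_mul_of_nonneg_left hT; positivity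
    calc -(B/(4*J)) * T ≤ |B|/(4*J) * |T| := by rw [← h2]; exact h1
      _ ≤ |B|/(4*J) * (2*S) := h3
      _ = (|B|/(2*J)) * S := by field_simp; ring
  have hMain : ∑ e ∈ Finset.Icc 1 (N-1), Θ e
      ≤ -∑ e ∈ Finset.Icc 1 (N-1), (u e)^2 * (τ + (A - |B|)/(2*J)) := by
    rw [hSum, hRHS]
    have : (A - |B|)/(2*J) = A/(2*J) - |B|/(2*J) := by ring
    nlinarith [hBT]
  refine ⟨hMain, fun hτ => ?_⟩
  have hRHS0 : -∑ e ∈ Finset.Icc 1 (N-1), (u e)^2 * (τ + (A - |B|)/(2*J)) ≤ 0 := by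
    rw [neg_nonpos]
    apply Finset.sum_nonneg
    intro e _
    have : 0 ≤ τ + (A - |B|)/(2*J) := by
      have : (A - |B|)/(2*J) = -((|B| - A)/(2*J)) := by ring
      linarith
    positivity
  linarith
end
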